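/- For ν ∈ ℂ define K_ν(y) = (1/2)·∫_0^∞ e^{-y(t + 1/t)/2} t^ν dt/t for y > 0. Then for every s ∈ ℂ with Re s > |Re ν|, ∫_0^∞ K_ν(y) y^s dy/y = 2^{s-2}·Γ((s+ν)/2)·Γ((s-ν)/2). -/

import Mathlib

/-!
Substituting `t = 2u/y` in the defining integral gives
`K_ν(y) = 2^(ν-1) y^(-ν) ∫_0^∞ u^(ν-1) e^(-u) e^(-y²/(4u)) du`.
After exchanging the order of integration (Tonelli, run with the real parts of the exponents,
gives absolute convergence for `Re s > |Re ν|`), the inner `y`-integral is a Gaussian Mellin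
transform `∫_0^∞ y^(c-1) e^(-b y²) dy = b^(-c/2) Γ(c/2) / 2` with `b = 1/(4u)` and `c = s - ν`,
which leaves `4^((s-ν)/2) Γ((s-ν)/2) / 2` times the Gamma integral at `(s+ν)/2`.
-/

open MeasureTheory Real

/-- The K-Bessel function of order `ν`, defined for `y > 0` by
`K_ν(y) = (1/2)∫_0^∞ e^{-y(t+1/t)/2} t^ν dt/t`. -/
noncomputable def besselK (ν : ℂ) (y : ℝ) : ℂ :=
  (1/2) * ∫ t in Set.Ioi (0:ℝ), (Real.exp (-(y * (t + 1/t) / 2)) : ℂ) * (t : ℂ) ^ (ν - 1)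

open Set

theorem mellin_exp_neg_mul_sq {b : ℝ} (hb : 0 < b) {c : ℂ} (hc : 0 < c.re) :
    mellin (fun y : ℝ ↦ (rexp (-b * y ^ 2) : ℂ)) c
      = (b : ℂ) ^ (-(c / 2)) * Complex.Gamma (c / 2) / 2 := by
  have hsq : (fun y : ℝ ↦ (rexp (-b * y ^ 2) : ℂ))
      = fun y ↦ (fun x : ℝ ↦ (rexp (-(b * x)) : ℂ)) (y ^ (2 : ℝ)) := by
    ext y
    simp
  rw [hsq, mellin_comp_rpow (fun x : ℝ ↦ (rexp (-(b * x)) : ℂ)),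
    mellin_comp_mul_left (fun x : ℝ ↦ (rexp (-x) : ℂ)) _ hb, ← Complex.GammaIntegral_eq_mellin,
    ← Complex.Gamma_eq_integral (by simpa using hc)]
  simp only [Nat.abs_ofNat, Complex.ofReal_ofNat, smul_eq_mul, Complex.real_smul,
    Complex.ofReal_inv]
  ring

theorem integral_rpow_mul_exp_neg_mul_sq {b : ℝ} (hb : 0 < b) {γ : ℝ} (hγ : 0 < γ) :
    ∫ y in Ioi (0 : ℝ), y ^ (γ - 1) * rexp (-b * y ^ 2)
      = b ^ (-(γ / 2)) * Gamma (γ / 2) / 2 := by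
  simp_rw [← rpow_two]
  rw [integral_rpow_mul_exp_neg_mul_rpow two_pos (by linarith) hb]
  ring_nf

noncomputable def besselMellinKernel (a c : ℂ) (y u : ℝ) : ℂ :=
  (u : ℂ) ^ (a - 1) * rexp (-u) * ((y : ℂ) ^ (c - 1) * rexp (-(4 * u)⁻¹ * y ^ 2))

section besselMellinKernel

variable {a c : ℂ}

theorem norm_besselMellinKernel {y u : ℝ} (hy : 0 < y) (hu : 0 < u) :
    ‖besselMellinKernel a c y u‖
      = u ^ (a.re - 1) * rexp (-u) * (y ^ (c.re - 1) * rexp (-(4 * u)⁻¹ * y ^ 2)) := by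
  simp only [besselMellinKernel, norm_mul, Complex.norm_cpow_eq_rpow_re_of_pos, hy, hu,
    Complex.sub_re, Complex.one_re, Complex.norm_real, norm_of_nonneg (exp_pos _).le]

theorem integral_norm_besselMellinKernel (hc : 0 < c.re) {u : ℝ} (hu : 0 < u) :
    ∫ y in Ioi (0 : ℝ), ‖besselMellinKernel a c y u‖
      = 4 ^ (c.re / 2) * Gamma (c.re / 2) / 2 * (rexp (-u) * u ^ (a.re + c.re / 2 - 1)) := by
  rw [setIntegral_congr_fun measurableSet_Ioi fun y hy ↦ norm_besselMellinKernel hy hu,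
    integral_const_mul, integral_rpow_mul_exp_neg_mul_sq (by positivity) hc,
    inv_rpow (by positivity), ← rpow_neg (by positivity), neg_neg, mul_rpow (by norm_num) hu.le,
    show a.re + c.re / 2 - 1 = a.re - 1 + c.re / 2 by ring, rpow_add hu]
  ring

theorem integrable_besselMellinKernel (ha : 0 < a.re + c.re / 2) (hc : 0 < c.re) :
    Integrable (Function.uncurry (besselMellinKernel a c))
      ((volume.restrict (Ioi 0)).prod (volume.restrict (Ioi 0))) := by
  have hmeas : Measurable (Function.uncurry (besselMellinKernel a c)) := by
    unfold besselMellinKernel Function.uncurry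
    fun_prop
  rw [integrable_prod_iff' hmeas.aestronglyMeasurable]
  constructor
  · filter_upwards [ae_restrict_mem measurableSet_Ioi] with u (hu : 0 < u)
    refine (integrable_norm_iff (hmeas.comp measurable_prodMk_right).aestronglyMeasurable).1 ?_
    refine ((integrableOn_rpow_mul_exp_neg_mul_sq (b := (4 * u)⁻¹) (by positivity)
      (by linarith : -1 < c.re - 1)).const_mul (u ^ (a.re - 1) * rexp (-u))).congr ?_
    filter_upwards [ae_restrict_mem measurableSet_Ioi] with y hy
    exact (norm_besselMellinKernel hy hu).symm
  · refine ((Real.GammaIntegral_convergent ha).const_mul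
      (4 ^ (c.re / 2) * Gamma (c.re / 2) / 2)).congr ?_
    filter_upwards [ae_restrict_mem measurableSet_Ioi] with u hu
    exact (integral_norm_besselMellinKernel hc hu).symm

theorem integral_besselMellinKernel_left (hc : 0 < c.re) {u : ℝ} (hu : 0 < u) :
    ∫ y in Ioi (0 : ℝ), besselMellinKernel a c y u
      = (4 : ℂ) ^ (c / 2) * Complex.Gamma (c / 2) / 2
          * (rexp (-u) * (u : ℂ) ^ (a + c / 2 - 1)) := by
  have hgauss := mellin_exp_neg_mul_sq (inv_pos.2 (by positivity : 0 < 4 * u)) hc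
  simp only [mellin, smul_eq_mul] at hgauss
  simp only [besselMellinKernel]
  rw [integral_const_mul, hgauss, Complex.ofReal_inv,
    Complex.inv_cpow_ofReal_nonneg (by positivity), Complex.cpow_neg, inv_inv,
    Complex.ofReal_mul, Complex.mul_cpow_ofReal_nonneg (by norm_num) hu.le,
    show a + c / 2 - 1 = a - 1 + c / 2 by ring,
    Complex.cpow_add _ _ (Complex.ofReal_ne_zero.2 hu.ne')]
  push_cast
  ring

theorem integral_besselMellinKernel (ha : 0 < a.re + c.re / 2) (hc : 0 < c.re) :
    ∫ y in Ioi (0 : ℝ), ∫ u in Ioi (0 : ℝ), besselMellinKernel a c y u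
      = (4 : ℂ) ^ (c / 2) * Complex.Gamma (c / 2) / 2 * Complex.Gamma (a + c / 2) := by
  rw [integral_integral_swap (integrable_besselMellinKernel ha hc),
    setIntegral_congr_fun measurableSet_Ioi fun u hu ↦ integral_besselMellinKernel_left hc hu,
    integral_const_mul, Complex.Gamma_eq_integral (s := a + c / 2) (by simpa using ha)]
  rfl

end besselMellinKernel

theorem besselK_eq_mellin (ν : ℂ) (y : ℝ) :
    besselK ν y = mellin (fun t : ℝ ↦ (rexp (-(y * (t + 1 / t) / 2)) : ℂ)) ν / 2 := by
  simp only [besselK, mellin, smul_eq_mul, mul_comm]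
  ring

theorem cpow_mul_besselK (ν s : ℂ) {y : ℝ} (hy : 0 < y) :
    (y : ℂ) ^ (s - 1) * besselK ν y
      = 2 ^ (ν - 1) * ∫ u in Ioi (0 : ℝ), besselMellinKernel ν (s - ν) y u := by
  have hsubst : (fun t : ℝ ↦ (rexp (-(y * (t + 1 / t) / 2)) : ℂ))
      = fun t ↦ (fun u : ℝ ↦ (rexp (-u) * rexp (-(4 * u)⁻¹ * y ^ 2) : ℂ)) (y / 2 * t) := by
    ext t
    simp only [← Complex.ofReal_mul, ← exp_add]
    congr 2
    rcases eq_or_ne t 0 with rfl | ht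
    · simp
    · field_simp
      ring
  have hpow : (y : ℂ) ^ (s - 1) * ((y / 2 : ℝ) : ℂ) ^ (-ν) / 2
      = 2 ^ (ν - 1) * (y : ℂ) ^ (s - ν - 1) := by
    rw [Complex.ofReal_div, Complex.div_cpow_ofReal_nonneg hy.le zero_le_two,
      Complex.cpow_neg ((2 : ℝ) : ℂ), show s - ν - 1 = s - 1 + -ν by ring,
      Complex.cpow_add _ _ (Complex.ofReal_ne_zero.2 hy.ne'),
      Complex.cpow_sub _ _ two_ne_zero, Complex.cpow_one]
    push_cast
    field_simp
  have hpull : ∫ u in Ioi (0 : ℝ), (u : ℂ) ^ (ν - 1) * rexp (-u)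
        * ((y : ℂ) ^ (s - ν - 1) * rexp (-(4 * u)⁻¹ * y ^ 2))
      = (∫ u in Ioi (0 : ℝ), (u : ℂ) ^ (ν - 1) * (rexp (-u) * rexp (-(4 * u)⁻¹ * y ^ 2)))
          * (y : ℂ) ^ (s - ν - 1) := by
    rw [← integral_mul_const]
    congr 1 with u
    ring
  rw [besselK_eq_mellin, hsubst, mellin_comp_mul_left
    (fun u : ℝ ↦ (rexp (-u) * rexp (-(4 * u)⁻¹ * y ^ 2) : ℂ)) _ (by positivity : 0 < y / 2)]
  simp only [besselMellinKernel, mellin, smul_eq_mul]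
  rw [hpull, mul_comm _ ((y : ℂ) ^ (s - ν - 1)), ← mul_assoc, ← hpow]
  ring

theorem mellin_besselK (ν s : ℂ) (hs : |ν.re| < s.re) :
    mellin (besselK ν) s
      = 2 ^ (s - 2) * Complex.Gamma ((s + ν) / 2) * Complex.Gamma ((s - ν) / 2) := by
  obtain ⟨hνs, hsν⟩ := abs_lt.1 hs
  have hc : 0 < (s - ν).re := by rw [Complex.sub_re]; linarith
  have ha : 0 < ν.re + (s - ν).re / 2 := by rw [Complex.sub_re]; linarith
  have hfour : (4 : ℂ) ^ ((s - ν) / 2) = 2 ^ (s - ν) := by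
    rw [show (4 : ℂ) = ((2 : ℕ) : ℂ) ^ 2 by norm_num, ← Complex.natCast_cpow_natCast_mul,
      Nat.cast_ofNat, mul_div_cancel₀ _ two_ne_zero]
  have htwo : (2 : ℂ) ^ (ν - 1) * 2 ^ (s - ν) / 2 = 2 ^ (s - 2) := by
    rw [← Complex.cpow_add _ _ two_ne_zero, show ν - 1 + (s - ν) = s - 2 + 1 by ring,
      Complex.cpow_add _ _ two_ne_zero, Complex.cpow_one, mul_div_cancel_right₀ _ two_ne_zero]
  simp only [mellin, smul_eq_mul]
  rw [setIntegral_congr_fun measurableSet_Ioi fun y hy ↦ cpow_mul_besselK ν s hy,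
    integral_const_mul, integral_besselMellinKernel ha hc, hfour, ← htwo,
    show ν + (s - ν) / 2 = (s + ν) / 2 by ring]
  ring

theorem stmt_7 (ν s : ℂ) (hs : |ν.re| < s.re) :
    ∫ y in Set.Ioi (0:ℝ), besselK ν y * (y : ℂ) ^ (s - 1)
      = (2:ℂ) ^ (s - 2) * Complex.Gamma ((s + ν)/2) * Complex.Gamma ((s - ν)/2) := by
  simpa only [mellin, smul_eq_mul, mul_comm] using mellin_besselK ν s hs
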